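/- arXiv:1107.1836 — 8 statements merged into one kernel-verified Lean document; each statement's English description precedes it below -/
import Mathlib

section
/- Let n ≥ 1, let α(x) := Σ_{k=1}^n arctan(x_k) for x ∈ ℝⁿ, and define a(x) := Σ_{k=0}^{⌊(n-1)/2⌋} (-1)^k s_{2k+1}(x) and b(x) := Σ_{k=0}^{⌊n/2⌋} (-1)^k s_{2k}(x), where s_m denotes the m-th elementary symmetric polynomial. Then for every x ∈ ℝⁿ, cos(α(x)) = b(x)/√(∏_{k=1}^n (1 + x_k²)) and sin(α(x)) = a(x)/√(∏_{k=1}^n (1 + x_k²)). -/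
open Finset Real

open Finset

/-- The `m`-th elementary symmetric polynomial of `x : Fin n → ℝ`. -/
noncomputable def esymmVal {n : ℕ} (m : ℕ) (x : Fin n → ℝ) : ℝ :=
  ∑ S ∈ Finset.powersetCard m (Finset.univ : Finset (Fin n)), ∏ i ∈ S, x i

/-- `a(x) = Σ_{k=0}^{⌊(n-1)/2⌋} (-1)^k s_{2k+1}(x)`. -/
noncomputable def aVal {n : ℕ} (x : Fin n → ℝ) : ℝ :=
  ∑ k ∈ Finset.range ((n - 1) / 2 + 1), (-1 : ℝ) ^ k * esymmVal (2 * k + 1) x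

/-- `b(x) = Σ_{k=0}^{⌊n/2⌋} (-1)^k s_{2k}(x)`. -/
noncomputable def bVal {n : ℕ} (x : Fin n → ℝ) : ℝ :=
  ∑ k ∈ Finset.range (n / 2 + 1), (-1 : ℝ) ^ k * esymmVal (2 * k) x

lemma sum_range_even_odd {M : Type*} [AddCommMonoid M] (f : ℕ → M) (N : ℕ) :
    ∑ m ∈ Finset.range N, f m
      = (∑ k ∈ Finset.range ((N + 1) / 2), f (2 * k))
        + ∑ k ∈ Finset.range (N / 2), f (2 * k + 1) := by
  induction N with
  | zero => simp
  | succ N ih =>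
    rw [Finset.sum_range_succ, ih]
    rcases Nat.even_or_odd N with ⟨m, rfl⟩ | ⟨m, rfl⟩
    · have h1 : (m + m + 1 + 1) / 2 = m + 1 := by omega
      have h2 : (m + m + 1) / 2 = m := by omega
      have h3 : (m + m) / 2 = m := by omega
      have h4 : m + m = 2 * m := by omega
      rw [h1, h2, h3, h4, Finset.sum_range_succ (fun k => f (2 * k)) m]
      abel
    · have h1 : (2 * m + 1 + 1 + 1) / 2 = m + 1 := by omega
      have h2 : (2 * m + 1 + 1) / 2 = m + 1 := by omega
      have h3 : (2 * m + 1) / 2 = m := by omega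
      rw [h1, h2, h3, Finset.sum_range_succ (fun k => f (2 * k + 1)) m]
      abel

lemma prod_one_add_mul_I {n : ℕ} (hn : 1 ≤ n) (x : Fin n → ℝ) :
    ∏ k, ((1 : ℂ) + (x k : ℂ) * Complex.I)
      = (bVal x : ℂ) + (aVal x : ℂ) * Complex.I := by
  have hexp : ∏ k, ((1 : ℂ) + (x k : ℂ) * Complex.I)
      = ∑ m ∈ Finset.range (n + 1),
          ∑ S ∈ Finset.powersetCard m (Finset.univ : Finset (Fin n)),
            (∏ i ∈ S, (x i : ℂ)) * Complex.I ^ m := by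
    have := Finset.prod_add (fun k : Fin n => (x k : ℂ) * Complex.I)
      (fun _ : Fin n => (1 : ℂ)) Finset.univ
    simp only [Finset.prod_const_one, mul_one] at this
    have hcomm : ∏ k, ((1 : ℂ) + (x k : ℂ) * Complex.I)
        = ∏ k, ((x k : ℂ) * Complex.I + 1) := by
      congr 1; ext k; ring
    rw [hcomm, this, Finset.sum_powerset]
    simp only [Finset.card_univ, Fintype.card_fin]
    refine Finset.sum_congr rfl fun m _ => Finset.sum_congr rfl fun S hS => ?_
    rw [Finset.prod_mul_distrib, Finset.prod_const,
      (Finset.mem_powersetCard.mp hS).2]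
  rw [hexp]
  have hterm : ∀ m, ∑ S ∈ Finset.powersetCard m (Finset.univ : Finset (Fin n)),
      (∏ i ∈ S, (x i : ℂ)) * Complex.I ^ m
        = (esymmVal m x : ℂ) * Complex.I ^ m := by
    intro m
    rw [← Finset.sum_mul]
    congr 1
    rw [esymmVal]
    push_cast
    rfl
  simp only [hterm]
  rw [sum_range_even_odd (fun m => (esymmVal m x : ℂ) * Complex.I ^ m) (n + 1)]
  have he : (n + 1 + 1) / 2 = n / 2 + 1 := by omega
  have ho : (n + 1) / 2 = (n - 1) / 2 + 1 := by omega
  rw [he, ho, bVal, aVal]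
  push_cast
  rw [Finset.sum_mul]
  congr 1
  · refine Finset.sum_congr rfl fun k _ => ?_
    rw [pow_mul, Complex.I_sq]
    ring
  · refine Finset.sum_congr rfl fun k _ => ?_
    rw [pow_succ, pow_mul, Complex.I_sq]
    ring

theorem stmt_2 (n : ℕ) (hn : 1 ≤ n) (x : Fin n → ℝ) :
    Real.cos (∑ k, Real.arctan (x k)) = bVal x / Real.sqrt (∏ k, (1 + (x k) ^ 2)) ∧
    Real.sin (∑ k, Real.arctan (x k)) = aVal x / Real.sqrt (∏ k, (1 + (x k) ^ 2)) := by
  set α := ∑ k, Real.arctan (x k) with hα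
  have hpos : ∀ k : Fin n, (0 : ℝ) < 1 + (x k) ^ 2 := fun k => by positivity
  have hPpos : (0 : ℝ) < Real.sqrt (∏ k, (1 + (x k) ^ 2)) := by
    apply Real.sqrt_pos.mpr
    exact Finset.prod_pos fun k _ => hpos k
  have hsqrt : Real.sqrt (∏ k, (1 + (x k) ^ 2)) = ∏ k, Real.sqrt (1 + (x k) ^ 2) := by
    rw [show (∏ k, (1 + (x k) ^ 2)) = (∏ k, Real.sqrt (1 + (x k) ^ 2)) ^ 2 by
          rw [← Finset.prod_pow]
          exact Finset.prod_congr rfl fun k _ => (Real.sq_sqrt (hpos k).le).symm,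
        Real.sqrt_sq (Finset.prod_nonneg fun k _ => Real.sqrt_nonneg _)]
  have hP : ((Real.sqrt (∏ k, (1 + (x k) ^ 2)) : ℝ) : ℂ) ≠ 0 := by
    exact_mod_cast hPpos.ne'
  have h1 : Complex.exp (α * Complex.I) * ((Real.sqrt (∏ k, (1 + (x k) ^ 2)) : ℝ) : ℂ)
      = ∏ k, ((1 : ℂ) + (x k : ℂ) * Complex.I) := by
    rw [hα, Complex.ofReal_sum, Finset.sum_mul, Complex.exp_sum, hsqrt,
      Complex.ofReal_prod, ← Finset.prod_mul_distrib]
    refine Finset.prod_congr rfl fun k _ => ?_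
    rw [Complex.exp_mul_I]
    have hc : Complex.cos (Real.arctan (x k)) = ((Real.cos (Real.arctan (x k)) : ℝ) : ℂ) := by
      rw [Complex.ofReal_cos]
    have hs : Complex.sin (Real.arctan (x k)) = ((Real.sin (Real.arctan (x k)) : ℝ) : ℂ) := by
      rw [Complex.ofReal_sin]
    rw [hc, hs, Real.cos_arctan, Real.sin_arctan]
    have hne : ((Real.sqrt (1 + (x k) ^ 2) : ℝ) : ℂ) ≠ 0 := by
      exact_mod_cast (Real.sqrt_pos.mpr (hpos k)).ne'
    push_cast
    have hne' : Real.sqrt (1 + (x k) ^ 2) ≠ 0 := (Real.sqrt_pos.mpr (hpos k)).ne'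
    field_simp
  have h2 : Complex.exp (α * Complex.I)
      = ((bVal x : ℂ) + (aVal x : ℂ) * Complex.I)
        / ((Real.sqrt (∏ k, (1 + (x k) ^ 2)) : ℝ) : ℂ) := by
    rw [← prod_one_add_mul_I hn x, ← h1]
    field_simp
  rw [Complex.exp_mul_I] at h2
  have hc : Complex.cos (α : ℂ) = ((Real.cos α : ℝ) : ℂ) := by rw [Complex.ofReal_cos]
  have hs : Complex.sin (α : ℂ) = ((Real.sin α : ℝ) : ℂ) := by rw [Complex.ofReal_sin]
  rw [hc, hs] at h2
  have h3 : ((Real.cos α : ℝ) : ℂ) + ((Real.sin α : ℝ) : ℂ) * Complex.I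
      = (((bVal x / Real.sqrt (∏ k, (1 + (x k) ^ 2))) : ℝ) : ℂ)
        + (((aVal x / Real.sqrt (∏ k, (1 + (x k) ^ 2))) : ℝ) : ℂ) * Complex.I := by
    rw [h2]
    push_cast
    field_simp
  rw [Complex.ext_iff] at h3
  simp only [Complex.add_re, Complex.add_im, Complex.ofReal_re, Complex.ofReal_im,
    Complex.mul_re, Complex.mul_im, Complex.I_re, Complex.I_im] at h3
  constructor
  · have := h3.1; simpa using this
  · have := h3.2; simpa using this
end

section
/- Let n ≥ 1 and define a(x) := Σ_{k=0}^{⌊(n-1)/2⌋} (-1)^k s_{2k+1}(x) and b(x) := Σ_{k=0}^{⌊n/2⌋} (-1)^k s_{2k}(x) for x ∈ ℝⁿ, where s_m denotes the m-th elementary symmetric polynomial. Fix x ∈ ℝⁿ with a(x) ≠ 0 and fix an index k ∈ {1,…,n}. Then the function of one real variable t ↦ -arctan( b(x₁,…,x_{k-1}, t, x_{k+1},…,x_n) / a(x₁,…,x_{k-1}, t, x_{k+1},…,x_n) ) is differentiable at t = x_k with derivative 1/(1 + x_k²). -/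
open Finset Real

open Finset

/-!
Since `∏ⱼ (1 + i xⱼ) = Σₘ iᵐ sₘ(x) = b(x) + i a(x)`, moving the `k`-th coordinate to `t`
multiplies `b + i a` by `(1 + i t) / (1 + i xₖ)`. Hence `b` and `a` are affine in `t`,
`b + i a = (1 + i t) P` for a fixed `P ∈ ℂ`, and `-arctan (b / a)` differs from `arctan t` by a
locally constant amount.
-/

open Complex

lemma esymmVal_eq_zero_of_lt {n m : ℕ} (x : Fin n → ℝ) (h : n < m) : esymmVal m x = 0 := by
  rw [esymmVal, powersetCard_eq_empty.mpr (by simpa using h), sum_empty]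

lemma sum_range_two_mul {M : Type*} [AddCommMonoid M] (f : ℕ → M) (N : ℕ) :
    ∑ m ∈ range (2 * N), f m = ∑ k ∈ range N, (f (2 * k) + f (2 * k + 1)) := by
  induction N with
  | zero => simp
  | succ N ih =>
    rw [mul_add, mul_one, sum_range_succ, sum_range_succ, sum_range_succ, ih, add_assoc]

lemma prod_one_add_mul_I_s3 {n : ℕ} (x : Fin n → ℝ) :
    ∏ j, (1 + (x j : ℂ) * I) = ∑ m ∈ range (n + 1), I ^ m * esymmVal m x := by
  rw [prod_one_add, sum_powerset]
  simp only [card_univ, Fintype.card_fin, esymmVal, ofReal_sum, ofReal_prod, mul_sum]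
  refine sum_congr rfl fun m _ => sum_congr rfl fun S hS => ?_
  rw [prod_mul_distrib, prod_const, (mem_powersetCard.mp hS).2, mul_comm]

lemma bVal_add_aVal_mul_I {n : ℕ} (x : Fin n → ℝ) :
    (bVal x : ℂ) + aVal x * I = ∏ j, (1 + (x j : ℂ) * I) := by
  have hvanish : ∀ m, n < m → I ^ m * esymmVal m x = 0 := fun m h => by
    rw [esymmVal_eq_zero_of_lt x h, ofReal_zero, mul_zero]
  have hodd : aVal x = ∑ k ∈ range (n / 2 + 1), (-1 : ℝ) ^ k * esymmVal (2 * k + 1) x := by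
    refine sum_subset (range_subset_range.mpr (by omega)) fun k hk hk' => ?_
    rw [esymmVal_eq_zero_of_lt x (by simp at hk hk'; omega), mul_zero]
  -- pad to `m < 2 (⌊n/2⌋ + 1)` (as `sₘ = 0` for `m > n`) and pair each even `m` with `m + 1`
  rw [prod_one_add_mul_I_s3, sum_subset (range_subset_range.mpr (by omega : n + 1 ≤ 2 * (n / 2 + 1)))
    (fun m _ hm => hvanish m (by simpa using hm)), sum_range_two_mul, bVal, hodd, ofReal_sum,
    ofReal_sum, sum_mul, ← sum_add_distrib]
  refine sum_congr rfl fun k _ => ?_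
  push_cast
  rw [pow_succ, pow_mul, I_sq]
  ring

lemma prod_update_one_add_mul_I {ι : Type*} [Fintype ι] [DecidableEq ι] (x : ι → ℝ) (k : ι)
    (t : ℝ) :
    ∏ j, (1 + (Function.update x k t j : ℂ) * I)
      = (1 + t * I) * ∏ j ∈ univ.erase k, (1 + (x j : ℂ) * I) := by
  rw [← mul_prod_erase univ _ (mem_univ k), Function.update_self]
  congr 1
  exact prod_congr rfl fun j hj => by rw [Function.update_of_ne (ne_of_mem_erase hj)]

lemma bVal_add_aVal_mul_I_update {n : ℕ} (x : Fin n → ℝ) (k : Fin n) (t : ℝ) :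
    (bVal (Function.update x k t) : ℂ) + aVal (Function.update x k t) * I
      = (1 + t * I) * ∏ j ∈ univ.erase k, (1 + (x j : ℂ) * I) :=
  (bVal_add_aVal_mul_I _).trans (prod_update_one_add_mul_I x k t)

lemma hasDerivAt_neg_arctan_div (A C c : ℝ) (h : A + c * C ≠ 0) :
    HasDerivAt (fun t => -Real.arctan ((C - t * A) / (A + t * C))) (1 / (1 + c ^ 2)) c := by
  have hu : HasDerivAt (fun t : ℝ => C - t * A) (0 - 1 * A) c :=
    (hasDerivAt_const c C).sub ((hasDerivAt_id c).mul_const A)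
  have hv : HasDerivAt (fun t : ℝ => A + t * C) (0 + 1 * C) c :=
    (hasDerivAt_const c A).add ((hasDerivAt_id c).mul_const C)
  have hAC : A ^ 2 + C ^ 2 ≠ 0 := fun h0 => h <| by
    rw [(by nlinarith : A = 0), (by nlinarith : C = 0)]; ring
  refine ((hu.div hv h).arctan).neg.congr_deriv ?_
  have hsq : 1 + ((C - c * A) / (A + c * C)) ^ 2
      = (1 + c ^ 2) * (A ^ 2 + C ^ 2) / (A + c * C) ^ 2 := by
    rw [div_pow, one_add_div (pow_ne_zero 2 h)]
    ring
  simp only [Pi.div_apply, hsq]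
  field_simp
  ring

theorem stmt_3_general (n : ℕ) (x : Fin n → ℝ) (ha : aVal x ≠ 0) (k : Fin n) :
    HasDerivAt
      (fun t : ℝ =>
        -Real.arctan (bVal (Function.update x k t) / aVal (Function.update x k t)))
      (1 / (1 + (x k) ^ 2)) (x k) := by
  set P := ∏ j ∈ univ.erase k, (1 + (x j : ℂ) * I)
  have hupdate : ∀ t, bVal (Function.update x k t) = P.re - t * P.im ∧
      aVal (Function.update x k t) = P.im + t * P.re := fun t => by
    simpa [Complex.ext_iff] using bVal_add_aVal_mul_I_update x k t
  have hfun : (fun t : ℝ =>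
      -Real.arctan (bVal (Function.update x k t) / aVal (Function.update x k t)))
      = fun t => -Real.arctan ((P.re - t * P.im) / (P.im + t * P.re)) :=
    funext fun t => by rw [(hupdate t).1, (hupdate t).2]
  rw [hfun]
  refine hasDerivAt_neg_arctan_div _ _ _ ?_
  rwa [← (hupdate (x k)).2, Function.update_eq_self]

theorem stmt_3 (n : ℕ) (hn : 1 ≤ n) (x : Fin n → ℝ) (ha : aVal x ≠ 0) (k : Fin n) :
    HasDerivAt
      (fun t : ℝ =>
        -Real.arctan (bVal (Function.update x k t) / aVal (Function.update x k t)))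
      (1 / (1 + (x k) ^ 2)) (x k) :=
  stmt_3_general n x ha k
end

section
/- Let n ≥ 1 and define a(x) := Σ_{k=0}^{⌊(n-1)/2⌋} (-1)^k s_{2k+1}(x) and b(x) := Σ_{k=0}^{⌊n/2⌋} (-1)^k s_{2k}(x) for x ∈ ℝⁿ, where s_m denotes the m-th elementary symmetric polynomial. Fix x ∈ ℝⁿ with b(x) ≠ 0 and fix an index k ∈ {1,…,n}. Then the function of one real variable t ↦ arctan( a(x₁,…,x_{k-1}, t, x_{k+1},…,x_n) / b(x₁,…,x_{k-1}, t, x_{k+1},…,x_n) ) is differentiable at t = x_k with derivative 1/(1 + x_k²). -/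
open Finset Real

open Finset

/-!
Since `∏ⱼ (1 + i xⱼ) = Σₘ iᵐ sₘ(x)`, splitting into even and odd `m` gives
`∏ⱼ (1 + i xⱼ) = b(x) + i a(x)`. Hence, for `P := ∏_{j ≠ k} (1 + i xⱼ)`, replacing `x_k` by `t`
makes `b` and `a` the real and imaginary parts of `(1 + i t) P`, i.e. `b = p - t q` and
`a = q + t p` with `P = p + i q`. So `a / b` is the Möbius map `t ↦ (q + t p) / (p - t q)`,
which is `tan (θ + arctan t)` for `tan θ = q / p`; its arctangent has derivative `1 / (1 + t²)`.
-/

open Complex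

lemma Finset.sum_range_eq_sum_even_add_sum_odd {M : Type*} [AddCommMonoid M] (f : ℕ → M)
    (N : ℕ) :
    ∑ m ∈ range N, f m
      = ∑ j ∈ range ((N + 1) / 2), f (2 * j) + ∑ j ∈ range (N / 2), f (2 * j + 1) := by
  induction N with
  | zero => simp
  | succ N ih =>
    obtain ⟨c, rfl | rfl⟩ := Nat.even_or_odd' N
    · rw [sum_range_succ, ih, show (2 * c + 1 + 1) / 2 = c + 1 by omega,
        show (2 * c + 1) / 2 = c by omega, show 2 * c / 2 = c by omega, sum_range_succ]
      abel
    · rw [sum_range_succ, ih, show (2 * c + 1 + 1 + 1) / 2 = c + 1 by omega,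
        show (2 * c + 1 + 1) / 2 = c + 1 by omega, show (2 * c + 1) / 2 = c by omega,
        sum_range_succ (fun j => f (2 * j + 1))]
      abel

lemma prod_one_add_ofReal_mul_I {n : ℕ} (y : Fin n → ℝ) :
    ∏ j, (1 + (y j : ℂ) * I) = ∑ m ∈ range (n + 1), I ^ m * (esymmVal m y : ℂ) := by
  rw [prod_one_add, sum_powerset, card_univ, Fintype.card_fin]
  refine sum_congr rfl fun m _ => ?_
  rw [esymmVal, ofReal_sum, mul_sum]
  refine sum_congr rfl fun S hS => ?_
  rw [prod_mul_distrib, prod_const, (mem_powersetCard.mp hS).2, ofReal_prod, mul_comm]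

lemma prod_one_add_ofReal_mul_I_eq_bVal_add_aVal_mul_I {n : ℕ} (hn : 0 < n) (y : Fin n → ℝ) :
    ∏ j, (1 + (y j : ℂ) * I) = (bVal y : ℂ) + (aVal y : ℂ) * I := by
  rw [prod_one_add_ofReal_mul_I, sum_range_eq_sum_even_add_sum_odd,
    show (n + 1 + 1) / 2 = n / 2 + 1 by omega, show (n + 1) / 2 = (n - 1) / 2 + 1 by omega,
    bVal, aVal]
  push_cast
  rw [sum_mul]
  congr 1 <;> refine sum_congr rfl fun j _ => ?_
  · rw [pow_mul, I_sq]
  · rw [pow_succ, pow_mul, I_sq]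
    ring

section update

variable {n : ℕ} (hn : 0 < n) (x : Fin n → ℝ) (k : Fin n) (t : ℝ)
include hn

lemma bVal_update_add_aVal_update_mul_I :
    (bVal (Function.update x k t) : ℂ) + (aVal (Function.update x k t) : ℂ) * I
      = (1 + (t : ℂ) * I) * ∏ j ∈ univ.erase k, (1 + (x j : ℂ) * I) := by
  rw [← prod_one_add_ofReal_mul_I_eq_bVal_add_aVal_mul_I hn, ← mul_prod_erase _ _ (mem_univ k)]
  congr 1
  · rw [Function.update_self]
  · refine prod_congr rfl fun j hj => ?_
    rw [Function.update_of_ne (ne_of_mem_erase hj)]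

lemma bVal_update :
    bVal (Function.update x k t)
      = (∏ j ∈ univ.erase k, (1 + (x j : ℂ) * I)).re
        - t * (∏ j ∈ univ.erase k, (1 + (x j : ℂ) * I)).im := by
  simpa using congrArg re (bVal_update_add_aVal_update_mul_I hn x k t)

lemma aVal_update :
    aVal (Function.update x k t)
      = (∏ j ∈ univ.erase k, (1 + (x j : ℂ) * I)).im
        + t * (∏ j ∈ univ.erase k, (1 + (x j : ℂ) * I)).re := by
  simpa [add_comm] using congrArg im (bVal_update_add_aVal_update_mul_I hn x k t)

end update

lemma Real.hasDerivAt_arctan_add_mul_div_sub_mul {p q t : ℝ} (h : p - t * q ≠ 0) :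
    HasDerivAt (fun s => Real.arctan ((q + s * p) / (p - s * q))) (1 / (1 + t ^ 2)) t := by
  have hnum : HasDerivAt (fun s => q + s * p) p t := by
    simpa using ((hasDerivAt_id t).mul_const p).const_add q
  have hden : HasDerivAt (fun s => p - s * q) (-q) t := by
    simpa using ((hasDerivAt_id t).mul_const q).const_sub p
  convert (hnum.div hden h).arctan using 1
  · rfl
  simp only [Pi.div_apply]
  field_simp
  ring

theorem stmt_4_general (n : ℕ) (x : Fin n → ℝ) (hb : bVal x ≠ 0) (k : Fin n) :
    HasDerivAt
      (fun t : ℝ =>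
        Real.arctan (aVal (Function.update x k t) / bVal (Function.update x k t)))
      (1 / (1 + (x k) ^ 2)) (x k) := by
  have hn : 0 < n := k.pos
  rw [← Function.update_eq_self k x, bVal_update hn] at hb
  simp_rw [aVal_update hn, bVal_update hn]
  exact Real.hasDerivAt_arctan_add_mul_div_sub_mul hb

theorem stmt_4 (n : ℕ) (hn : 1 ≤ n) (x : Fin n → ℝ) (hb : bVal x ≠ 0) (k : Fin n) :
    HasDerivAt
      (fun t : ℝ =>
        Real.arctan (aVal (Function.update x k t) / bVal (Function.update x k t)))
      (1 / (1 + (x k) ^ 2)) (x k) :=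
  stmt_4_general n x hb k
end

section
/- Let m, n ≥ 1, let Ω ⊆ ℝ^m be open, and let λ : Ω → ℝⁿ be a continuous map such that, for every k ∈ {0,1,…,n}, the composed function p ↦ s_k(λ(p)) is C^∞ on Ω, where s_k denotes the k-th elementary symmetric polynomial in n variables. Then the function φ : Ω → ℝ, φ(p) := Σ_{k=1}^n arctan(λ_k(p)), is C^∞ on Ω. -/
open Finset Real
open Finset

open Complex in
lemma aux_factor_ne (x : ℝ) : (1 : ℂ) + x * I ≠ 0 := by
  intro h
  have := congrArg Complex.re h
  simp at this

open Complex in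
lemma aux_log_im (x : ℝ) : (Complex.log (1 + x * I)).im = Real.arctan x := by
  have hre : ((1 : ℂ) + x * I).re = 1 := by simp
  have him : ((1 : ℂ) + x * I).im = x := by simp
  have h1 : Real.tan (Complex.arg (1 + x * I)) = x := by
    rw [Complex.tan_arg, hre, him, div_one]
  have hpos : (0:ℝ) < ((1 : ℂ) + x * I).re := by rw [hre]; norm_num
  have h2 : -(π/2) < Complex.arg (1 + x*I) :=
    Complex.neg_pi_div_two_lt_arg_iff.2 (Or.inl hpos)
  have h3 : Complex.arg (1 + x*I) < π/2 :=
    Complex.arg_lt_pi_div_two_iff.2 (Or.inl hpos)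
  have h4 := Real.arctan_tan h2 h3
  rw [h1] at h4
  rw [Complex.log_im, ← h4]

open Complex in
lemma aux_prod (n : ℕ) (x : Fin n → ℝ) :
    ∏ k, (1 + (x k : ℂ) * I) = ∑ j ∈ Finset.range (n+1), (esymmVal j x : ℂ) * I ^ j := by
  have h1 : ∏ k, (1 + (x k : ℂ) * I) = ∏ k, ((x k : ℂ) * I + 1) :=
    Finset.prod_congr rfl fun k _ => add_comm _ _
  rw [h1, Finset.prod_add]
  simp only [Finset.prod_const_one, mul_one]
  rw [Finset.powerset_card_disjiUnion]; erw [Finset.sum_disjiUnion]; rw [Finset.card_univ,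
    Fintype.card_fin]
  refine Finset.sum_congr rfl fun j _ => ?_
  rw [esymmVal, Complex.ofReal_sum, Finset.sum_mul]
  refine Finset.sum_congr rfl fun t ht => ?_
  have hc : t.card = j := (Finset.mem_powersetCard.1 ht).2
  rw [Finset.prod_mul_distrib, Finset.prod_const, hc, Complex.ofReal_prod]

open Complex in
lemma aux_exp (n : ℕ) (x : Fin n → ℝ) :
    Complex.exp (∑ k, Complex.log (1 + x k * I)) = ∏ k, (1 + (x k : ℂ) * I) := by
  rw [Complex.exp_sum]
  exact Finset.prod_congr rfl fun k _ => Complex.exp_log (aux_factor_ne _)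

theorem stmt_6 (m n : ℕ) (hm : 1 ≤ m) (hn : 1 ≤ n)
    (Ω : Set (Fin m → ℝ)) (hΩ : IsOpen Ω)
    (lam : (Fin m → ℝ) → (Fin n → ℝ)) (hcont : ContinuousOn lam Ω)
    (hsymm : ∀ k ≤ n, ContDiffOn ℝ (⊤ : ℕ∞) (fun p => esymmVal k (lam p)) Ω) :
    ContDiffOn ℝ (⊤ : ℕ∞) (fun p => ∑ k, Real.arctan (lam p k)) Ω := by
  classical
  set F : (Fin m → ℝ) → ℂ :=
    fun p => ∑ j ∈ Finset.range (n+1), (esymmVal j (lam p) : ℂ) * Complex.I ^ j with hFdef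
  have hFsmooth : ContDiffOn ℝ (⊤ : ℕ∞) F Ω := by
    apply ContDiffOn.sum
    intro j hj
    have hj' : j ≤ n := Nat.lt_succ_iff.1 (Finset.mem_range.1 hj)
    have h1 : ContDiffOn ℝ (⊤ : ℕ∞) (fun p => ((esymmVal j (lam p) : ℝ) : ℂ)) Ω :=
      Complex.ofRealCLM.contDiff.comp_contDiffOn (hsymm j hj')
    exact h1.mul contDiffOn_const
  have hFprod : ∀ p, F p = ∏ k, (1 + (lam p k : ℂ) * Complex.I) :=
    fun p => (aux_prod n (lam p)).symm
  have hFne : ∀ p, F p ≠ 0 := by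
    intro p
    rw [hFprod p]
    exact Finset.prod_ne_zero_iff.2 fun k _ => aux_factor_ne _
  set L : (Fin m → ℝ) → ℂ :=
    fun p => ∑ k, Complex.log (1 + lam p k * Complex.I) with hLdef
  have hexpL : ∀ p, Complex.exp (L p) = F p := by
    intro p; rw [hFprod p]; exact aux_exp n (lam p)
  have hLim : ∀ p, (L p).im = ∑ k, Real.arctan (lam p k) := by
    intro p
    rw [hLdef]
    rw [Complex.im_sum]
    exact Finset.sum_congr rfl fun k _ => aux_log_im _
  have hLcont : ContinuousOn L Ω := by
    apply continuousOn_finset_sum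
    intro k _
    apply ContinuousOn.clog
    · exact continuousOn_const.add
        ((Complex.continuous_ofReal.comp_continuousOn
          ((continuous_apply k).comp_continuousOn hcont)).mul continuousOn_const)
    · intro p _
      rw [Complex.mem_slitPlane_iff]
      left; simp
  apply contDiffOn_of_locally_contDiffOn
  intro p0 hp0
  set c : ℂ := F p0 with hc
  have hcne : c ≠ 0 := hFne p0
  have hopen : IsOpen (Ω ∩ F ⁻¹' {z | z / c ∈ Complex.slitPlane}) := by
    apply hFsmooth.continuousOn.isOpen_inter_preimage hΩ
    exact Complex.isOpen_slitPlane.preimage (continuous_id.div_const c)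
  have hp0mem : p0 ∈ Ω ∩ F ⁻¹' {z | z / c ∈ Complex.slitPlane} := by
    refine ⟨hp0, ?_⟩
    simp only [Set.mem_preimage, Set.mem_setOf_eq, ← hc, div_self hcne]
    exact Complex.one_mem_slitPlane
  obtain ⟨ε, hε, hball⟩ := Metric.isOpen_iff.1 hopen p0 hp0mem
  refine ⟨Metric.ball p0 ε, Metric.isOpen_ball, Metric.mem_ball_self hε, ?_⟩
  set u : Set (Fin m → ℝ) := Metric.ball p0 ε with hu
  have husub : u ⊆ Ω := fun p hp => (hball hp).1
  have hslit : ∀ p ∈ u, F p / c ∈ Complex.slitPlane := fun p hp => (hball hp).2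
  -- the smooth branch of the logarithm
  set g : (Fin m → ℝ) → ℂ := fun p => Complex.log (F p / c) + L p0 with hg
  have hgsmooth : ContDiffOn ℝ (⊤ : ℕ∞) g u := by
    intro p hp
    have hFat : ContDiffAt ℝ (⊤ : ℕ∞) F p := hFsmooth.contDiffAt (hΩ.mem_nhds (husub hp))
    have hFc : ContDiffAt ℝ (⊤ : ℕ∞) (fun q => F q / c) p := hFat.div_const c
    have hlog : ContDiffAt ℂ (⊤ : ℕ∞) Complex.log (F p / c) :=
      (analyticAt_clog (hslit p hp)).contDiffAt
    exact (((hlog.restrict_scalars ℝ).comp p hFc).add contDiffAt_const).contDiffWithinAt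
  have hgcont : ContinuousOn g u := hgsmooth.continuousOn
  -- the difference L - g takes values in 2πℤ (in the imaginary part) on u
  have hdiff : ∀ p ∈ u, ∃ k : ℤ, (L p).im - (g p).im = 2 * π * k := by
    intro p hp
    have h1 : Complex.exp (L p - g p) = 1 := by
      rw [Complex.exp_sub, hexpL p, hg]
      simp only
      rw [Complex.exp_add, Complex.exp_log (div_ne_zero (hFne p) hcne), hexpL p0, ← hc]
      rw [div_mul_cancel₀ _ hcne, div_self (hFne p)]
    obtain ⟨k, hk⟩ := Complex.exp_eq_one_iff.1 h1
    refine ⟨k, ?_⟩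
    have := congrArg Complex.im hk
    simp only [Complex.sub_im] at this
    rw [this]
    have : ((k : ℂ) * (2 * ↑π * Complex.I)).im = (k : ℝ) * (2 * π) := by
      simp [Complex.mul_im]
    rw [this]; ring
  -- define d, show it vanishes on u by a connectedness argument
  set d : (Fin m → ℝ) → ℝ := fun p => (L p).im - (g p).im with hd
  have hdcont : ContinuousOn d u :=
    ((Complex.continuous_im.comp_continuousOn (hLcont.mono husub)).sub
      (Complex.continuous_im.comp_continuousOn hgcont))
  have hdp0 : d p0 = 0 := by
    have : g p0 = L p0 := by
      rw [hg]; simp only [← hc, div_self hcne, Complex.log_one, zero_add]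
    simp [hd, this]
  have hdzero : ∀ p ∈ u, d p = 0 := by
    have hconn : IsPreconnected u := (convex_ball p0 ε).isPreconnected
    by_contra hne
    push_neg at hne
    obtain ⟨q, hq, hqne⟩ := hne
    set A : Set (Fin m → ℝ) := u ∩ d ⁻¹' {x | |x| < 2 * π} with hA
    set B : Set (Fin m → ℝ) := u ∩ d ⁻¹' {x | π < |x|} with hB
    have hAopen : IsOpen A :=
      hdcont.isOpen_inter_preimage Metric.isOpen_ball
        (isOpen_lt continuous_abs continuous_const)
    have hBopen : IsOpen B :=
      hdcont.isOpen_inter_preimage Metric.isOpen_ball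
        (isOpen_lt continuous_const continuous_abs)
    have hcover : u ⊆ A ∪ B := by
      intro p hp
      obtain ⟨k, hk⟩ := hdiff p hp
      rcases eq_or_ne k 0 with h0 | h0
      · left; refine ⟨hp, ?_⟩
        have hdk : d p = 2 * π * k := hk
        simp only [Set.mem_preimage, Set.mem_setOf_eq, hdk, h0]
        simp [Real.pi_pos]
      · right; refine ⟨hp, ?_⟩
        have hdk : d p = 2 * π * k := hk
        simp only [Set.mem_preimage, Set.mem_setOf_eq]
        rw [hdk, abs_mul]
        have h2 : (1:ℝ) ≤ |(k:ℝ)| := by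
          rw [← Int.cast_abs]
          exact_mod_cast Int.one_le_abs h0
        have h3 : |2 * π| = 2 * π := abs_of_pos (by positivity)
        nlinarith [Real.pi_pos]
    have hAne : (u ∩ A).Nonempty := by
      refine ⟨p0, Metric.mem_ball_self hε, Metric.mem_ball_self hε, ?_⟩
      simp only [Set.mem_preimage, Set.mem_setOf_eq, hdp0]
      simp [Real.pi_pos]
    have hBne : (u ∩ B).Nonempty := by
      refine ⟨q, hq, hq, ?_⟩
      obtain ⟨k, hk⟩ := hdiff q hq
      have hdk : d q = 2 * π * k := hk
      have h0 : k ≠ 0 := by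
        intro h; apply hqne; rw [hdk, h]; simp
      simp only [Set.mem_preimage, Set.mem_setOf_eq]
      rw [hdk, abs_mul]
      have h2 : (1:ℝ) ≤ |(k:ℝ)| := by
        rw [← Int.cast_abs]
        exact_mod_cast Int.one_le_abs h0
      have h3 : |2 * π| = 2 * π := abs_of_pos (by positivity)
      nlinarith [Real.pi_pos]
    obtain ⟨p, hpu, hpA, hpB⟩ := hconn A B hAopen hBopen hcover hAne hBne
    have h1 : |d p| < 2 * π := hpA.2
    have h2 : π < |d p| := hpB.2
    obtain ⟨k, hk⟩ := hdiff p hpu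
    have hk' : d p = 2 * π * k := hk
    rcases eq_or_ne k 0 with h0 | h0
    · rw [hk', h0] at h2; simp at h2; linarith [Real.pi_pos]
    · have h3 : (1:ℝ) ≤ |(k:ℝ)| := by
        rw [← Int.cast_abs]; exact_mod_cast Int.one_le_abs h0
      rw [hk', abs_mul, abs_of_pos (show (0:ℝ) < 2 * π by positivity)] at h1
      nlinarith [Real.pi_pos]
  -- conclude
  have heq : Set.EqOn (fun p => ∑ k, Real.arctan (lam p k)) (fun p => (g p).im) (Ω ∩ u) := by
    intro p hp
    have h0 := hdzero p hp.2
    have : (L p).im = (g p).im := by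
      have := sub_eq_zero.1 h0
      exact this
    simp only [← hLim p, this]
  have hgim : ContDiffOn ℝ (⊤ : ℕ∞) (fun p => (g p).im) (Ω ∩ u) :=
    (Complex.imCLM.contDiff.comp_contDiffOn (hgsmooth.mono Set.inter_subset_right))
  exact hgim.congr heq
end

section
/- Let κ > 0 and 0 ≤ C < π/2 be real numbers, and let λ₁, λ₂ ∈ ℝ satisfy λ₁·λ₂ ≤ κ and |arctan(λ₁/√κ) + arctan(λ₂/√κ)| ≤ C. Then κ − λ₁·λ₂ ≥ κ·cos(C); in particular κ − λ₁·λ₂ > 0. -/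
open Real

theorem stmt_7 (κ C lam₁ lam₂ : ℝ) (hκ : 0 < κ) (hC0 : 0 ≤ C) (hC : C < π / 2)
    (hK : lam₁ * lam₂ ≤ κ)
    (hangle : |Real.arctan (lam₁ / Real.sqrt κ) + Real.arctan (lam₂ / Real.sqrt κ)| ≤ C) :
    κ - lam₁ * lam₂ ≥ κ * Real.cos C ∧ 0 < κ - lam₁ * lam₂ := by
  set a := lam₁ / Real.sqrt κ with ha
  set b := lam₂ / Real.sqrt κ with hb
  have hsκ : 0 < Real.sqrt κ := Real.sqrt_pos.2 hκ
  have hab : a * b = lam₁ * lam₂ / κ := by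
    rw [ha, hb, div_mul_div_comm, Real.mul_self_sqrt hκ.le]
  have hab1 : a * b ≤ 1 := by
    rw [hab]; exact (div_le_one hκ).2 hK
  have hcosC : 0 < Real.cos C := Real.cos_pos_of_mem_Ioo ⟨by linarith [Real.pi_pos], hC⟩
  -- cos C ≤ cos |θ| = cos θ
  have hθ : Real.cos C ≤ Real.cos (Real.arctan a + Real.arctan b) := by
    have h := Real.cos_le_cos_of_nonneg_of_le_pi (abs_nonneg (Real.arctan a + Real.arctan b))
      (by linarith [Real.pi_pos]) hangle
    rwa [Real.cos_abs] at h
  have hcos : Real.cos (Real.arctan a + Real.arctan b)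
      = (1 - a * b) / (Real.sqrt (1 + a ^ 2) * Real.sqrt (1 + b ^ 2)) := by
    rw [Real.cos_add, Real.cos_arctan, Real.cos_arctan, Real.sin_arctan, Real.sin_arctan]
    field_simp
  have h1a : (1 : ℝ) ≤ Real.sqrt (1 + a ^ 2) := by
    have := Real.sqrt_le_sqrt (show (1:ℝ) ≤ 1 + a ^ 2 by nlinarith [sq_nonneg a])
    simpa using this
  have h1b : (1 : ℝ) ≤ Real.sqrt (1 + b ^ 2) := by
    have := Real.sqrt_le_sqrt (show (1:ℝ) ≤ 1 + b ^ 2 by nlinarith [sq_nonneg b])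
    simpa using this
  have hd1 : (1 : ℝ) ≤ Real.sqrt (1 + a ^ 2) * Real.sqrt (1 + b ^ 2) := by
    nlinarith
  have hle : Real.cos (Real.arctan a + Real.arctan b) ≤ 1 - a * b := by
    rw [hcos]
    exact div_le_self (by linarith) hd1
  have key : Real.cos C ≤ 1 - a * b := le_trans hθ hle
  have key2 : κ * Real.cos C ≤ κ - lam₁ * lam₂ := by
    have := mul_le_mul_of_nonneg_left key hκ.le
    rw [mul_sub, hab, mul_div_cancel₀ _ (ne_of_gt hκ)] at this
    linarith
  exact ⟨key2, lt_of_lt_of_le (by positivity) key2⟩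
end

section
/- Let h be a real symmetric 2×2 matrix and let C : Fin 2 × Fin 2 × Fin 2 → ℝ be totally symmetric (invariant under all permutations of its three indices). Define H := tr(h), the tracefree part h° := h − (H/2)·I, |h°|² := Σ_{j,k} (h°_{jk})², (∇H)_i := Σ_j C_{ijj}, |∇h|² := Σ_{i,j,k} (C_{ijk})², |∇H|² := Σ_i ((∇H)_i)², and v_i := 2·Σ_{j,k} h°_{jk}·C_{ijk}. Then 2·|h°|²·( |∇h|² − |∇H|² ) = Σ_i (v_i)² − 2·Σ_{i,j} h°_{ij}·v_i·(∇H)_j. -/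
open Finset Matrix

theorem stmt_12 (h : Matrix (Fin 2) (Fin 2) ℝ) (hsymm : h.IsSymm)
    (C : Fin 2 → Fin 2 → Fin 2 → ℝ)
    (hC1 : ∀ i j k, C i j k = C j i k) (hC2 : ∀ i j k, C i j k = C i k j)
    (H : ℝ) (hH : H = h.trace)
    (h0 : Matrix (Fin 2) (Fin 2) ℝ) (hh0 : h0 = h - (H / 2) • (1 : Matrix (Fin 2) (Fin 2) ℝ))
    (gH : Fin 2 → ℝ) (hgH : ∀ i, gH i = ∑ j, C i j j)
    (v : Fin 2 → ℝ) (hv : ∀ i, v i = 2 * ∑ j, ∑ k, h0 j k * C i j k) :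
    2 * (∑ j, ∑ k, (h0 j k) ^ 2) *
        ((∑ i, ∑ j, ∑ k, (C i j k) ^ 2) - ∑ i, (gH i) ^ 2) =
      (∑ i, (v i) ^ 2) - 2 * ∑ i, ∑ j, h0 i j * v i * gH j := by
  have hs : h 1 0 = h 0 1 := by
    have := congrFun (congrFun hsymm 1) 0
    simpa [Matrix.transpose_apply] using this.symm
  have h001 : C 0 0 1 = C 0 1 0 := hC2 0 0 1
  have h100 : C 1 0 0 = C 0 1 0 := hC1 1 0 0
  have h110 : C 1 1 0 = C 1 0 1 := hC2 1 1 0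
  have h011 : C 0 1 1 = C 1 0 1 := hC1 0 1 1
  simp only [hh0, hgH, hv, hH, Matrix.trace_fin_two, Fin.sum_univ_two,
    Matrix.sub_apply, Matrix.smul_apply, Matrix.one_apply, smul_eq_mul]
  norm_num [h001, h100, h110, h011, hs]
  ring
end

section
/- Let h be a real symmetric 2×2 matrix and let C : Fin 2 × Fin 2 × Fin 2 → ℝ be totally symmetric (invariant under all permutations of its three indices). Define H := tr(h), |h|² := Σ_{j,k} (h_{jk})², |∇h|² := Σ_{i,j,k} (C_{ijk})², and u_i := 2·Σ_{j,k} h_{jk}·C_{ijk}. Assume Σ_j C_{ijj} = 0 for every i (i.e. ∇H = 0). Then (2·|h|² − H²)·|∇h|² = Σ_i (u_i)². -/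
open Finset Matrix

theorem stmt_14 (h : Matrix (Fin 2) (Fin 2) ℝ) (hsymm : h.IsSymm)
    (C : Fin 2 → Fin 2 → Fin 2 → ℝ)
    (hC1 : ∀ i j k, C i j k = C j i k) (hC2 : ∀ i j k, C i j k = C i k j)
    (H : ℝ) (hH : H = h.trace)
    (u : Fin 2 → ℝ) (hu : ∀ i, u i = 2 * ∑ j, ∑ k, h j k * C i j k)
    (htr : ∀ i, (∑ j, C i j j) = 0) :
    (2 * (∑ j, ∑ k, (h j k) ^ 2) - H ^ 2) * (∑ i, ∑ j, ∑ k, (C i j k) ^ 2) =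
      ∑ i, (u i) ^ 2 := by
  have hs : h 1 0 = h 0 1 := hsymm.apply 0 1
  have e0 := htr 0
  have e1 := htr 1
  simp only [Fin.sum_univ_two] at e0 e1 ⊢
  have c1 : C 0 1 1 = -C 0 0 0 := by linarith
  have c2 : C 1 1 1 = -C 1 0 0 := by linarith
  have c3 : C 0 0 1 = C 1 0 0 := by rw [hC2, hC1]
  have c4 : C 0 1 0 = C 1 0 0 := by rw [hC1]
  have c5 : C 1 0 1 = C 0 1 1 := by rw [hC1]
  have c6 : C 1 1 0 = C 0 1 1 := by rw [hC2, hC1]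
  rw [hu 0, hu 1]
  simp only [Fin.sum_univ_two, Matrix.trace, Matrix.diag] at hH ⊢
  rw [hs, c3, c4, c5, c6, c1, c2, hH]
  ring
end

section
/- Let h be a real symmetric 2×2 matrix and let C : Fin 2 × Fin 2 × Fin 2 → ℝ be totally symmetric (invariant under all permutations of its three indices). Define H := tr(h), K := det(h), (∇H)_i := Σ_j C_{ijj}, (∇K)_i := Σ_{j,k} (H·δ_{jk} − h_{jk})·C_{ijk}, |∇h|² := Σ_{i,j,k} (C_{ijk})², |∇H|² := Σ_i ((∇H)_i)², and |∇K|² := Σ_i ((∇K)_i)². Then (H² − 4K)·( |∇h|² − |∇H|² ) = 2·Σ_{i,j} (H·δ_{ij} − h_{ij})·( H·(∇H)_i·(∇H)_j − 2·(∇H)_i·(∇K)_j ) − 2·H·Σ_i (∇H)_i·(∇K)_i + 4·|∇K|². -/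
open Finset Matrix

theorem stmt_15 (h : Matrix (Fin 2) (Fin 2) ℝ) (hsymm : h.IsSymm)
    (C : Fin 2 → Fin 2 → Fin 2 → ℝ)
    (hC1 : ∀ i j k, C i j k = C j i k) (hC2 : ∀ i j k, C i j k = C i k j)
    (H K : ℝ) (hH : H = h.trace) (hK : K = h.det)
    (gH : Fin 2 → ℝ) (hgH : ∀ i, gH i = ∑ j, C i j j)
    (gK : Fin 2 → ℝ)
    (hgK : ∀ i, gK i = ∑ j, ∑ k, (H * (if j = k then (1 : ℝ) else 0) - h j k) * C i j k) :
    (H ^ 2 - 4 * K) * ((∑ i, ∑ j, ∑ k, (C i j k) ^ 2) - ∑ i, (gH i) ^ 2) =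
      2 * (∑ i, ∑ j, (H * (if i = j then (1 : ℝ) else 0) - h i j) *
            (H * gH i * gH j - 2 * gH i * gK j))
        - 2 * H * (∑ i, gH i * gK i) + 4 * ∑ i, (gK i) ^ 2 := by
  have hb : h 1 0 = h 0 1 := by
    have := congrFun (congrFun hsymm 0) 1; simpa [Matrix.transpose_apply] using this
  have c100 : C 1 0 0 = C 0 0 1 := by rw [hC1, hC2]
  have c010 : C 0 1 0 = C 0 0 1 := by rw [hC2]
  have c101 : C 1 0 1 = C 0 1 1 := hC1 1 0 1
  have c110 : C 1 1 0 = C 0 1 1 := by rw [hC2]; exact c101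
  have hHv : H = h 0 0 + h 1 1 := by
    rw [hH, Matrix.trace]; simp [Fin.sum_univ_two, Matrix.diag]
  have hKv : K = h 0 0 * h 1 1 - h 0 1 * h 1 0 := by
    rw [hK, Matrix.det_fin_two]
  simp only [Fin.sum_univ_two, hgH, hgK] at *
  simp only [Fin.sum_univ_two, c100, c010, c110, c101, hb] at *
  subst hHv hKv
  norm_num
  ring
end
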